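/- Assume u ≠ 0, v ≠ 0, and let x ∈ ℝ^m satisfy |Σ_{i : u_i ≠ 0} sgn(u_i) x_i| < Σ_{i : u_i = 0} |x_i|. Then (x, 0) is a local minimum of f, f(x,0) = ‖u‖₁‖v‖₁ > 0, and (x,0) is not a global minimum of f (indeed f(u,v) = 0). -/
import Mathlib


open scoped Classical


lemma sgn_mul (a b : ℝ) : Real.sign (a * b) = Real.sign a * Real.sign b := by
  rcases lt_trichotomy a 0 with ha|ha|ha <;> rcases lt_trichotomy b 0 with hb|hb|hb
  · rw [Real.sign_of_pos (mul_pos_of_neg_of_neg ha hb), Real.sign_of_neg ha, Real.sign_of_neg hb]; ring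
  · simp [hb]
  · rw [Real.sign_of_neg (mul_neg_of_neg_of_pos ha hb), Real.sign_of_neg ha, Real.sign_of_pos hb]; ring
  · simp [ha]
  · simp [ha]
  · simp [ha]
  · rw [Real.sign_of_neg (mul_neg_of_pos_of_neg ha hb), Real.sign_of_pos ha, Real.sign_of_neg hb]; ring
  · simp [hb]
  · rw [Real.sign_of_pos (mul_pos ha hb), Real.sign_of_pos ha, Real.sign_of_pos hb]; ring

lemma abs_sgn_le (a : ℝ) : |Real.sign a| ≤ 1 := by
  rcases lt_trichotomy a 0 with h|h|h <;>
    simp [Real.sign_of_neg, Real.sign_of_pos, h]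

lemma keyA (b c : ℝ) : |b| - Real.sign b * c ≤ |c - b| := by
  have h1 : |b| = Real.sign b * b := by
    rcases lt_trichotomy b 0 with h|h|h
    · rw [Real.sign_of_neg h, abs_of_neg h]; ring
    · simp [h]
    · rw [Real.sign_of_pos h, abs_of_pos h]; ring
  have h2 : |Real.sign b * (b - c)| ≤ |b - c| := by
    rw [abs_mul]
    nlinarith [abs_sgn_le b, abs_nonneg (b - c)]
  have h3 : Real.sign b * (b - c) ≤ |b - c| := (le_abs_self _).trans h2
  rw [abs_sub_comm]
  nlinarith

lemma main_ineq {m n : ℕ} (u : Fin m → ℝ) (v : Fin n → ℝ) (z : Fin m → ℝ) (y : Fin n → ℝ)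
    (h : |∑ i ∈ Finset.univ.filter (fun i => u i ≠ 0), Real.sign (u i) * z i|
      ≤ ∑ i ∈ Finset.univ.filter (fun i => u i = 0), |z i|) :
    ∑ i, ∑ j, |u i * v j| ≤ ∑ i, ∑ j, |z i * y j - u i * v j| := by
  set A := Finset.univ.filter (fun i => u i = 0) with hA
  set B := Finset.univ.filter (fun i => u i ≠ 0) with hB
  set S := ∑ i ∈ B, Real.sign (u i) * z i with hS
  set T := ∑ i ∈ A, |z i| with hT
  set W := ∑ j, Real.sign (v j) * y j with hW
  set Y := ∑ j, |y j| with hY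
  have hWY : |W| ≤ Y := by
    refine (Finset.abs_sum_le_sum_abs _ _).trans (Finset.sum_le_sum fun j _ => ?_)
    rw [abs_mul]
    nlinarith [abs_sgn_le (v j), abs_nonneg (y j), abs_nonneg (Real.sign (v j))]
  have hY0 : 0 ≤ Y := Finset.sum_nonneg fun j _ => abs_nonneg _
  have hSW : S * W ≤ T * Y := by
    have h1 : S * W ≤ |S| * |W| := by
      calc S * W ≤ |S * W| := le_abs_self _
      _ = |S| * |W| := abs_mul _ _
    exact h1.trans (mul_le_mul h hWY (abs_nonneg _) ((abs_nonneg S).trans h))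
  have splitZ := Finset.sum_filter_add_sum_filter_not Finset.univ (fun i => u i = 0)
    (fun i => ∑ j, |z i * y j - u i * v j|)
  have splitU := Finset.sum_filter_add_sum_filter_not Finset.univ (fun i => u i = 0)
    (fun i => ∑ j, |u i * v j|)
  have hBeq : Finset.univ.filter (fun i => ¬ u i = 0) = B := rfl
  rw [hBeq] at splitZ splitU
  have hAzero : ∑ i ∈ A, ∑ j, |u i * v j| = 0 := by
    refine Finset.sum_eq_zero fun i hi => ?_
    have : u i = 0 := (Finset.mem_filter.mp hi).2
    simp [this]
  have hApart : ∑ i ∈ A, ∑ j, |z i * y j - u i * v j| = T * Y := by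
    rw [hT, Finset.sum_mul]
    refine Finset.sum_congr rfl fun i hi => ?_
    have hui : u i = 0 := (Finset.mem_filter.mp hi).2
    rw [hY, Finset.mul_sum]
    refine Finset.sum_congr rfl fun j _ => ?_
    rw [hui, zero_mul, sub_zero, abs_mul]
  have hBpart : (∑ i ∈ B, ∑ j, |u i * v j|) - S * W ≤ ∑ i ∈ B, ∑ j, |z i * y j - u i * v j| := by
    rw [hS, Finset.sum_mul, ← Finset.sum_sub_distrib]
    refine Finset.sum_le_sum fun i _ => ?_
    rw [hW, Finset.mul_sum, ← Finset.sum_sub_distrib]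
    refine Finset.sum_le_sum fun j _ => ?_
    have hkey := keyA (u i * v j) (z i * y j)
    rw [sgn_mul] at hkey
    have : Real.sign (u i) * z i * (Real.sign (v j) * y j)
        = Real.sign (u i) * Real.sign (v j) * (z i * y j) := by ring
    linarith
  have hUtot : ∑ i, ∑ j, |u i * v j| = ∑ i ∈ B, ∑ j, |u i * v j| := by
    rw [← splitU, hAzero, zero_add]
  rw [← splitZ, hApart, hUtot]
  nlinarith

/-- If `u ≠ 0`, `v ≠ 0` and `|Σ_{uᵢ≠0} sgn(uᵢ) xᵢ| < Σ_{uᵢ=0} |xᵢ|`, then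
`(x, 0)` is a local minimum of `f(x,y) = Σᵢ Σⱼ |xᵢ yⱼ − uᵢ vⱼ|` with
`f(x,0) = ‖u‖₁ ‖v‖₁ > 0`, and `(x,0)` is not a global minimum (indeed `f(u,v) = 0`). -/
theorem spurious_local_minimum_exists (m n : ℕ) (hm : 1 ≤ m) (hn : 1 ≤ n)
    (u : Fin m → ℝ) (v : Fin n → ℝ) (hu : u ≠ 0) (hv : v ≠ 0)
    (x : Fin m → ℝ)
    (hx : |∑ i ∈ Finset.univ.filter (fun i => u i ≠ 0), Real.sign (u i) * x i|
      < ∑ i ∈ Finset.univ.filter (fun i => u i = 0), |x i|) :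
    IsLocalMin (fun q : (Fin m → ℝ) × (Fin n → ℝ) =>
        ∑ i, ∑ j, |q.1 i * q.2 j - u i * v j|) (x, 0) ∧
    (∑ i, ∑ j, |x i * (0:ℝ) - u i * v j|) = (∑ i, |u i|) * (∑ j, |v j|) ∧
    0 < (∑ i, ∑ j, |x i * (0:ℝ) - u i * v j|) ∧
    ¬ (∀ p : (Fin m → ℝ) × (Fin n → ℝ),
        (∑ i, ∑ j, |x i * (0:ℝ) - u i * v j|) ≤ ∑ i, ∑ j, |p.1 i * p.2 j - u i * v j|) ∧
    (∑ i, ∑ j, |u i * v j - u i * v j|) = 0 := by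
  have huabs : 0 < ∑ i, |u i| := by
    obtain ⟨i, hi⟩ := Function.ne_iff.mp hu
    exact Finset.sum_pos' (fun _ _ => abs_nonneg _) ⟨i, Finset.mem_univ _, abs_pos.mpr hi⟩
  have hvabs : 0 < ∑ j, |v j| := by
    obtain ⟨j, hj⟩ := Function.ne_iff.mp hv
    exact Finset.sum_pos' (fun _ _ => abs_nonneg _) ⟨j, Finset.mem_univ _, abs_pos.mpr hj⟩
  have hfval : (∑ i, ∑ j, |x i * (0:ℝ) - u i * v j|) = (∑ i, |u i|) * (∑ j, |v j|) := by
    rw [Finset.sum_mul_sum]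
    refine Finset.sum_congr rfl fun i _ => Finset.sum_congr rfl fun j _ => ?_
    rw [mul_zero, zero_sub, abs_neg, abs_mul]
  refine ⟨?_, hfval, ?_, ?_, by simp⟩
  · -- local min
    set g : (Fin m → ℝ) × (Fin n → ℝ) → ℝ := fun q =>
      (∑ i ∈ Finset.univ.filter (fun i => u i = 0), |q.1 i|)
      - |∑ i ∈ Finset.univ.filter (fun i => u i ≠ 0), Real.sign (u i) * q.1 i| with hg
    have hgcont : Continuous g := by
      apply Continuous.sub
      · exact continuous_finset_sum _ fun i _ =>
          continuous_abs.comp ((continuous_apply i).comp continuous_fst)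
      · exact continuous_abs.comp (continuous_finset_sum _ fun i _ =>
          continuous_const.mul ((continuous_apply i).comp continuous_fst))
    have hgx : 0 < g (x, 0) := sub_pos.mpr hx
    have hev : ∀ᶠ q in nhds ((x, 0) : (Fin m → ℝ) × (Fin n → ℝ)), 0 < g q :=
      hgcont.continuousAt (Ioi_mem_nhds hgx)
    refine hev.mono fun q hq => ?_
    have key := main_ineq u v q.1 q.2 (sub_pos.mp hq).le
    have hval : (fun q : (Fin m → ℝ) × (Fin n → ℝ) =>
        ∑ i, ∑ j, |q.1 i * q.2 j - u i * v j|) (x, 0) = ∑ i, ∑ j, |u i * v j| := by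
      simp
    rw [hval]
    exact key
  · rw [hfval]; exact mul_pos huabs hvabs
  · intro hglob
    have h1 := hglob (u, v)
    simp only [sub_self, abs_zero, Finset.sum_const_zero] at h1
    rw [hfval] at h1
    nlinarith
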